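/- Let π := span{E_11, E_12+E_21, E_13+E_31} (the plane of type Σ7). Then exactly q+1 two-dimensional subspaces of π are equivalent to o6 and exactly q² are equivalent to o12. These account for all q²+q+1 two-dimensional subspaces of π. -/

import Mathlib

open Matrix

/-- The 3×3 matrices over `F`. -/
abbrev Mat (F : Type) : Type := Matrix (Fin 3) (Fin 3) F

section Defs

variable (F : Type) [Field F]

/-- The congruence action `M ↦ A * M * Aᵀ` as an `F`-linear map. -/
def congrAct (A : Mat F) : Mat F →ₗ[F] Mat F where
  toFun M := A * M * Aᵀ
  map_add' M N := by simp [Matrix.mul_add, Matrix.add_mul]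
  map_smul' c M := by simp [Matrix.mul_smul, Matrix.smul_mul]

/-- Two subspaces `V`, `W` of the space of 3×3 matrices over `F` are equivalent if
`W = A·V = {A * M * Aᵀ : M ∈ V}` for some invertible matrix `A`. -/
def MatEquiv (V W : Submodule F (Mat F)) : Prop :=
  ∃ A : Mat F, IsUnit A ∧ W = V.map (congrAct F A)

/-- `Eij F i j` is the 3×3 matrix with a single `1` in position `(i,j)`. -/
def Eij (i j : Fin 3) : Mat F := Matrix.single i j 1

/-- The number of two-dimensional subspaces of `π` that are equivalent to `ℓ`. -/
noncomputable def lineCount (π ℓ : Submodule F (Mat F)) : ℕ :=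
  Nat.card {W : Submodule F (Mat F) // W ≤ π ∧ Module.finrank F ↥W = 2 ∧ MatEquiv F W ℓ}

/-- Representative of the line orbit `o₅`. -/
def o5 : Submodule F (Mat F) :=
  Submodule.span F {Matrix.diagonal ![1, 0, 0], Matrix.diagonal ![0, 1, 0]}

/-- Representative of the line orbit `o₆`. -/
def o6 : Submodule F (Mat F) :=
  Submodule.span F {Matrix.diagonal ![1, 0, 0], Eij F 0 1 + Eij F 1 0}

/-- Representative of the line orbit `o₈,₁`. -/
def o8_1 : Submodule F (Mat F) :=
  Submodule.span F {Matrix.diagonal ![1, 0, 0], Matrix.diagonal ![0, 1, -1]}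

/-- Representative of the line orbit `o₈,₂`, for `ε` a nonsquare. -/
def o8_2 (ε : F) : Submodule F (Mat F) :=
  Submodule.span F {Matrix.diagonal ![1, 0, 0], Matrix.diagonal ![0, 1, -ε]}

/-- Representative of the line orbit `o₉`. -/
def o9 : Submodule F (Mat F) :=
  Submodule.span F {Matrix.diagonal ![1, 0, 0], Eij F 1 1 + Eij F 0 2 + Eij F 2 0}

/-- Representative of the line orbit `o₁₀`, for an admissible pair `(u, v)`. -/
def o10 (u v : F) : Submodule F (Mat F) :=
  Submodule.span F {v • Eij F 0 0 + Eij F 1 1, Eij F 0 1 + Eij F 1 0 + u • Eij F 1 1}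

/-- Representative of the line orbit `o₁₂`. -/
def o12 : Submodule F (Mat F) :=
  Submodule.span F {Eij F 0 1 + Eij F 1 0, Eij F 1 2 + Eij F 2 1}

/-- Representative of the line orbit `o₁₃,₁`. -/
def o13_1 : Submodule F (Mat F) :=
  Submodule.span F {Eij F 0 1 + Eij F 1 0, Matrix.diagonal ![0, 1, -1]}

/-- Representative of the line orbit `o₁₃,₂`, for `ε` a nonsquare. -/
def o13_2 (ε : F) : Submodule F (Mat F) :=
  Submodule.span F {Eij F 0 1 + Eij F 1 0, Matrix.diagonal ![0, 1, -ε]}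

/-- Representative of the line orbit `o₁₄,₁`. -/
def o14_1 : Submodule F (Mat F) :=
  Submodule.span F {Matrix.diagonal ![1, -1, 0], Matrix.diagonal ![0, -1, 1]}

/-- Representative of the line orbit `o₁₄,₂`, for `ε` a nonsquare. -/
def o14_2 (ε : F) : Submodule F (Mat F) :=
  Submodule.span F {Matrix.diagonal ![1, -ε, 0], Matrix.diagonal ![0, -ε, 1]}

/-- Representative of the line orbits `o₁₅,₁` and `o₁₅,₂`, for an admissible pair `(u, v)`. -/
def o15 (u v : F) : Submodule F (Mat F) :=
  Submodule.span F {Eij F 0 1 + Eij F 1 0 + u • Eij F 1 1 + Eij F 2 2, v • Eij F 0 0 + Eij F 1 1}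

/-- Representative of the line orbit `o₁₆`. -/
def o16 : Submodule F (Mat F) :=
  Submodule.span F {Eij F 1 1 + Eij F 0 2 + Eij F 2 0, Eij F 1 2 + Eij F 2 1}

/-- Representative of the line orbit `o₁₇`, for an admissible triple `(u, v, w)`. -/
def o17 (u v w : F) : Submodule F (Mat F) :=
  Submodule.span F {v⁻¹ • Eij F 0 0 - w • Eij F 1 1 + Eij F 1 2 + Eij F 2 1,
    Eij F 0 1 + Eij F 1 0 + u • Eij F 1 1 + Eij F 2 2}

/-- `(u, v)` is admissible for `o₁₀`: `v·λ² + u·v·λ − 1 ≠ 0` for all `λ ∈ F`. -/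
def o10Adm (u v : F) : Prop := ∀ l : F, v * l ^ 2 + u * v * l - 1 ≠ 0

/-- `(u, v)` is admissible for `o₁₅,₁`: additionally `−v` is a nonzero square. -/
def o15_1Adm (u v : F) : Prop := o10Adm F u v ∧ -v ≠ 0 ∧ IsSquare (-v)

/-- `(u, v)` is admissible for `o₁₅,₂`: additionally `−v` is a nonsquare. -/
def o15_2Adm (u v : F) : Prop := o10Adm F u v ∧ ¬ IsSquare (-v)

/-- `(u, v, w)` is admissible for `o₁₇`: `v ≠ 0` and `λ³ + w·λ² − u·λ + v ≠ 0` for all `λ ∈ F`. -/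
def o17Adm (u v w : F) : Prop := v ≠ 0 ∧ ∀ l : F, l ^ 3 + w * l ^ 2 - u * l + v ≠ 0

end Defs

/-- The plane of type Σ for statement 6. -/
def plane (F : Type) [Field F]  : Submodule F (Mat F) :=
  Submodule.span F {Eij F 0 0, Eij F 0 1 + Eij F 1 0, Eij F 0 2 + Eij F 2 0}

/-!
In coordinates `a E₁₁ + b (E₁₂ + E₂₁) + c (E₁₃ + E₃₁)` the plane `π` is a copy of `F³`, and its
two-dimensional subspaces split according to whether they contain `E₁₁`. Those through `E₁₁` are
spanned by `E₁₁` and some `b (E₁₂ + E₂₁) + c (E₁₃ + E₃₁) ≠ 0`; they form a projective line, so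
there are `q + 1` of them, and a congruence fixing `E₁₁` moves each onto `o₆`. The others are
graphs of linear forms `(b, c) ↦ a`, so there are `q²` of them, and each is spanned by two
matrices that a congruence (using `2 ≠ 0`) moves onto the generators of `o₁₂`. Finally `o₆` and
`o₁₂` are not equivalent: a congruence sends the rank-one `E₁₁` to some `v vᵀ` with `v ≠ 0`,
which has a nonzero diagonal entry, while every matrix of `o₁₂` has zero diagonal.
-/

open Module

lemma Nat.card_subtype_eq_add_card_subtype_not {α : Type*} [Finite α] (p q : α → Prop) :
    Nat.card {a // p a} = Nat.card {a // p a ∧ q a} + Nat.card {a // p a ∧ ¬q a} := by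
  classical
  rw [← Nat.card_congr (Equiv.subtypeSubtypeEquivSubtypeInter p q),
    ← Nat.card_congr (Equiv.subtypeSubtypeEquivSubtypeInter p (¬q ·)), ← Nat.card_sum]
  exact Nat.card_congr (Equiv.sumCompl _).symm

lemma Submodule.card_subtype_le_range {K V M : Type*} [Semiring K] [AddCommMonoid V] [Module K V]
    [AddCommMonoid M] [Module K M] {f : V →ₗ[K] M} (hf : Function.Injective f)
    (Q : Submodule K M → Prop) :
    Nat.card {W : Submodule K M // W ≤ LinearMap.range f ∧ Q W} =
      Nat.card {G : Submodule K V // Q (G.map f)} :=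
  Nat.card_congr
    { toFun W := ⟨W.1.comap f, by rw [Submodule.map_comap_eq_of_le W.2.1]; exact W.2.2⟩
      invFun G := ⟨G.1.map f, LinearMap.map_le_range, G.2⟩
      left_inv W := Subtype.ext (Submodule.map_comap_eq_of_le W.2.1)
      right_inv G := Subtype.ext (Submodule.comap_map_eq_of_injective hf G.1) }

lemma span_pair_eq_of_finrank_eq_two {K V : Type*} [Field K] [AddCommGroup V] [Module K V]
    {G : Submodule K V} (hG : finrank K G = 2) {x y : V} (hx : x ∈ G) (hy : y ∈ G)
    (hxy : LinearIndependent K ![x, y]) : Submodule.span K {x, y} = G := by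
  have : FiniteDimensional K G := Module.finite_of_finrank_eq_succ hG
  refine Submodule.eq_of_le_of_finrank_eq (Submodule.span_le.mpr ?_) ?_
  · rintro _ (rfl | rfl)
    exacts [hx, hy]
  · rw [hG, ← Matrix.range_cons_cons_empty, finrank_span_eq_card hxy, Fintype.card_fin]

section SubspacesOfProd

variable {K H : Type*} [Field K] [AddCommGroup H] [Module K H]

lemma finrank_prod_top [FiniteDimensional K H] (U : Submodule K H) :
    finrank K (U.prod (⊤ : Submodule K K)) = finrank K U + 1 := by
  have hinj : Function.Injective (U.subtype.prodMap (LinearMap.id : K →ₗ[K] K)) :=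
    U.injective_subtype.prodMap Function.injective_id
  have hrange : U.prod ⊤ = LinearMap.range (U.subtype.prodMap (LinearMap.id : K →ₗ[K] K)) := by
    rw [LinearMap.range_prodMap, U.range_subtype, LinearMap.range_id]
  rw [hrange, LinearMap.finrank_range_of_inj hinj, Module.finrank_prod, Module.finrank_self]

lemma prod_top_comap_inl {G : Submodule K (H × K)} (he : ((0, 1) : H × K) ∈ G) :
    (G.comap (LinearMap.inl K H K)).prod ⊤ = G := by
  ext ⟨x, y⟩
  have hxy : ((x, y) : H × K) = (x, 0) + y • (0, 1) := by simp
  simp only [Submodule.mem_prod, Submodule.mem_comap, LinearMap.inl_apply, Submodule.mem_top,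
    and_true]
  exact ⟨fun h => hxy ▸ G.add_mem h (G.smul_mem y he),
    fun h => by simpa using G.sub_mem h (G.smul_mem y he)⟩

def subspacesThroughInrOneEquiv [FiniteDimensional K H] (n : ℕ) :
    {G : Submodule K (H × K) // finrank K G = n + 1 ∧ ((0, 1) : H × K) ∈ G} ≃
      {U : Submodule K H // finrank K U = n} where
  toFun G := ⟨G.1.comap (LinearMap.inl K H K), by
    have := finrank_prod_top (G.1.comap (LinearMap.inl K H K))
    rw [prod_top_comap_inl G.2.2, G.2.1] at this
    omega⟩
  invFun U := ⟨U.1.prod ⊤, by rw [finrank_prod_top, U.2], by simp⟩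
  left_inv G := Subtype.ext (prod_top_comap_inl G.2.2)
  right_inv U := Subtype.ext (by ext x; simp)

lemma bijective_fst_comp_subtype [FiniteDimensional K H] {G : Submodule K (H × K)}
    (hG : finrank K G = finrank K H) (he : ((0, 1) : H × K) ∉ G) :
    Function.Bijective (Prod.fst ∘ G.subtype) := by
  have hinj : Function.Injective ((LinearMap.fst K H K).comp G.subtype) := by
    rw [← LinearMap.ker_eq_bot, LinearMap.ker_eq_bot']
    rintro ⟨⟨x, y⟩, hg⟩ h0
    obtain rfl : x = 0 := h0
    by_contra hy
    refine he ?_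
    have := G.smul_mem y⁻¹ hg
    simp_all
  exact ⟨hinj, (LinearMap.injective_iff_surjective_of_finrank_eq_finrank hG).mp hinj⟩

lemma LinearMap.finrank_graph {N : Type*} [AddCommGroup N] [Module K N] (f : H →ₗ[K] N) :
    finrank K f.graph = finrank K H := by
  rw [LinearMap.graph_eq_range_prod, LinearMap.finrank_range_of_inj]
  exact fun x y h => congrArg Prod.fst h

lemma inr_one_notMem_graph (f : H →ₗ[K] K) : ((0, 1) : H × K) ∉ f.graph := by
  simp [LinearMap.mem_graph_iff]

lemma LinearMap.graph_injective {N : Type*} [AddCommGroup N] [Module K N] :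
    Function.Injective (LinearMap.graph : (H →ₗ[K] N) → Submodule K (H × N)) := by
  intro f g h
  ext x
  have : (x, f x) ∈ g.graph := h ▸ (f.mem_graph_iff _).mpr rfl
  exact (g.mem_graph_iff _).mp this

lemma exists_eq_graph_of_inr_one_notMem [FiniteDimensional K H] {G : Submodule K (H × K)}
    (hG : finrank K G = finrank K H) (he : ((0, 1) : H × K) ∉ G) :
    ∃ f : H →ₗ[K] K, G = f.graph :=
  Submodule.exists_eq_graph (bijective_fst_comp_subtype hG he)

lemma card_subspaces_inr_one_notMem [Finite K] [FiniteDimensional K H] :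
    Nat.card {G : Submodule K (H × K) // finrank K G = finrank K H ∧ ((0, 1) : H × K) ∉ G} =
      Nat.card K ^ finrank K H := by
  have hbij : Function.Bijective fun f : H →ₗ[K] K =>
      (⟨f.graph, f.finrank_graph, inr_one_notMem_graph f⟩ :
        {G : Submodule K (H × K) // finrank K G = finrank K H ∧ ((0, 1) : H × K) ∉ G}) :=
    ⟨fun f g h => LinearMap.graph_injective (congrArg Subtype.val h), fun G => by
      obtain ⟨f, hf⟩ := exists_eq_graph_of_inr_one_notMem G.2.1 G.2.2
      exact ⟨f, Subtype.ext hf.symm⟩⟩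
  rw [← Nat.card_eq_of_bijective _ hbij, Module.natCard_eq_pow_finrank (K := K),
    Module.finrank_linearMap, Module.finrank_self, mul_one]

lemma card_subspaces_inr_one_mem [Finite K] [FiniteDimensional K H] (hH : finrank K H = 2) :
    Nat.card {G : Submodule K (H × K) // finrank K G = 2 ∧ ((0, 1) : H × K) ∈ G} =
      Nat.card K + 1 := by
  rw [Nat.card_congr
      ((subspacesThroughInrOneEquiv 1).trans (Projectivization.equivSubmodule K H).symm),
    Projectivization.card_of_finrank_two K H hH]

end SubspacesOfProd

section Plane

variable {F : Type} [Field F]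

lemma congrAct_apply (A M : Mat F) : congrAct F A M = A * M * Aᵀ := rfl

lemma congrAct_mul (A B : Mat F) : congrAct F (A * B) = (congrAct F A).comp (congrAct F B) := by
  ext M : 1
  simp only [congrAct_apply, LinearMap.comp_apply, Matrix.transpose_mul, Matrix.mul_assoc]

lemma congrAct_one : congrAct F 1 = LinearMap.id := by
  ext M : 1
  simp [congrAct_apply]

lemma MatEquiv.symm {V W : Submodule F (Mat F)} (h : MatEquiv F V W) : MatEquiv F W V := by
  obtain ⟨A, hA, rfl⟩ := h
  refine ⟨A⁻¹, (Matrix.isUnit_nonsing_inv_iff).mpr hA, ?_⟩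
  rw [← Submodule.map_comp, ← congrAct_mul,
    Matrix.nonsing_inv_mul _ ((Matrix.isUnit_iff_isUnit_det A).mp hA), congrAct_one,
    Submodule.map_id]

lemma MatEquiv.trans {U V W : Submodule F (Mat F)} (h₁ : MatEquiv F U V) (h₂ : MatEquiv F V W) :
    MatEquiv F U W := by
  obtain ⟨A, hA, rfl⟩ := h₁
  obtain ⟨B, hB, rfl⟩ := h₂
  exact ⟨B * A, hB.mul hA, by rw [congrAct_mul, Submodule.map_comp]⟩

lemma map_congrAct_span_pair (A P Q : Mat F) :
    (Submodule.span F {P, Q}).map (congrAct F A) = Submodule.span F {A * P * Aᵀ, A * Q * Aᵀ} := by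
  rw [Submodule.map_span, Set.image_pair]
  rfl

-- The `E₁₁`-coordinate comes last, so that the subspaces missing `E₁₁` are graphs over `(b, c)`.
def planeCoord : (F × F) × F →ₗ[F] Mat F where
  toFun x := !![x.2, x.1.1, x.1.2; x.1.1, 0, 0; x.1.2, 0, 0]
  map_add' x y := by ext i j; fin_cases i <;> fin_cases j <;> simp
  map_smul' c x := by ext i j; fin_cases i <;> fin_cases j <;> simp

lemma planeCoord_apply (x : (F × F) × F) :
    planeCoord x = !![x.2, x.1.1, x.1.2; x.1.1, 0, 0; x.1.2, 0, 0] := rfl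

lemma planeCoord_injective : Function.Injective (planeCoord (F := F)) := by
  rintro ⟨⟨b, c⟩, a⟩ ⟨⟨b', c'⟩, a'⟩ h
  have h00 := congrFun₂ h 0 0
  have h01 := congrFun₂ h 0 1
  have h02 := congrFun₂ h 0 2
  simp_all [planeCoord_apply]

lemma range_planeCoord : LinearMap.range (planeCoord (F := F)) = plane F := by
  have hE00 : Eij F 0 0 = planeCoord ((0, 0), 1) := by
    ext i j; fin_cases i <;> fin_cases j <;> simp [Eij, planeCoord_apply]
  have hS01 : Eij F 0 1 + Eij F 1 0 = planeCoord ((1, 0), 0) := by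
    ext i j; fin_cases i <;> fin_cases j <;> simp [Eij, planeCoord_apply]
  have hS02 : Eij F 0 2 + Eij F 2 0 = planeCoord ((0, 1), 0) := by
    ext i j; fin_cases i <;> fin_cases j <;> simp [Eij, planeCoord_apply]
  apply le_antisymm
  · rintro _ ⟨⟨⟨b, c⟩, a⟩, rfl⟩
    have : ((b, c), a) = a • ((0, 0), 1) + b • ((1, 0), 0) + c • (((0, 1), 0) : (F × F) × F) := by
      simp
    rw [this, map_add, map_add, map_smul, map_smul, map_smul, ← hE00, ← hS01, ← hS02]
    exact add_mem (add_mem (Submodule.smul_mem _ _ (Submodule.subset_span (by simp)))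
      (Submodule.smul_mem _ _ (Submodule.subset_span (by simp))))
      (Submodule.smul_mem _ _ (Submodule.subset_span (by simp)))
  · rw [plane, Submodule.span_le]
    rintro _ (rfl | rfl | rfl)
    · exact ⟨_, hE00.symm⟩
    · exact ⟨_, hS01.symm⟩
    · exact ⟨_, hS02.symm⟩

lemma finrank_map_planeCoord (G : Submodule F ((F × F) × F)) :
    finrank F (G.map planeCoord) = finrank F G :=
  (Submodule.equivMapOfInjective _ planeCoord_injective G).finrank_eq.symm

lemma exists_eq_span_pair_of_inr_one_notMem {G : Submodule F ((F × F) × F)} (hG : finrank F G = 2)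
    (he : ((0, 1) : (F × F) × F) ∉ G) :
    ∃ u v : F, G = Submodule.span F {((1, 0), u), ((0, 1), v)} := by
  obtain ⟨f, rfl⟩ := exists_eq_graph_of_inr_one_notMem (by rwa [Module.finrank_prod,
    Module.finrank_self]) he
  refine ⟨f (1, 0), f (0, 1), (span_pair_eq_of_finrank_eq_two hG ?_ ?_ ?_).symm⟩
  · exact (f.mem_graph_iff _).mpr rfl
  · exact (f.mem_graph_iff _).mpr rfl
  · rw [LinearIndependent.pair_iff]
    intro s t h
    have h1 := congrArg (·.1.1) h
    have h2 := congrArg (·.1.2) h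
    simp_all

lemma exists_eq_span_pair_of_inr_one_mem {G : Submodule F ((F × F) × F)} (hG : finrank F G = 2)
    (he : ((0, 1) : (F × F) × F) ∈ G) :
    ∃ b c : F, (b, c) ≠ 0 ∧ G = Submodule.span F {(0, 1), ((b, c), 0)} := by
  have hlt : Submodule.span F {((0, 1) : (F × F) × F)} < G := by
    refine lt_of_le_of_ne ((Submodule.span_singleton_le_iff_mem _ _).mpr he) fun h => ?_
    have := finrank_span_singleton (K := F) (v := ((0, 1) : (F × F) × F)) (by simp)
    rw [h, hG] at this
    exact absurd this (by norm_num)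
  obtain ⟨⟨⟨b, c⟩, a⟩, hg, hgs⟩ := SetLike.exists_of_lt hlt
  have hbc : (b, c) ≠ 0 := by
    rintro hbc
    rw [hbc] at hgs
    exact hgs (Submodule.mem_span_singleton.mpr ⟨a, by simp⟩)
  refine ⟨b, c, hbc, (span_pair_eq_of_finrank_eq_two hG he ?_ ?_).symm⟩
  · have : (((b, c), 0) : (F × F) × F) = ((b, c), a) - a • (0, 1) := by simp
    rw [this]
    exact G.sub_mem hg (G.smul_mem a he)
  · rw [LinearIndependent.pair_iff]
    intro s t h
    have h0 := congrArg (·.2) h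
    have hb := congrArg (·.1.1) h
    have hc := congrArg (·.1.2) h
    simp only [Prod.smul_mk, Prod.mk_add_mk, smul_eq_mul] at h0 hb hc
    refine ⟨by simpa using h0, ?_⟩
    by_contra ht
    exact hbc (by simp_all)

lemma matEquiv_o6_map_span_pair_inr_one {b c : F} (hbc : (b, c) ≠ 0) :
    MatEquiv F (o6 F) ((Submodule.span F {(0, 1), ((b, c), 0)}).map planeCoord) := by
  obtain ⟨x, y, hdet⟩ : ∃ x y : F, b * y - x * c ≠ 0 := by
    by_cases hb : b = 0
    · refine ⟨-1, 0, ?_⟩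
      have hc : c ≠ 0 := fun hc => hbc (by simp [hb, hc])
      simpa using hc
    · exact ⟨0, 1, by simpa using hb⟩
  set A : Mat F := !![1, 0, 0; 0, b, x; 0, c, y]
  have h1 : A * Matrix.diagonal ![1, 0, 0] * Aᵀ = planeCoord (0, 1) := by
    ext i j; fin_cases i <;> fin_cases j <;>
      simp [A, Matrix.mul_apply, Matrix.vecMul, dotProduct, Fin.sum_univ_three, planeCoord_apply]
  have h2 : A * (Eij F 0 1 + Eij F 1 0) * Aᵀ = planeCoord ((b, c), 0) := by
    ext i j; fin_cases i <;> fin_cases j <;>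
      simp [A, Matrix.mul_apply, Matrix.vecMul, dotProduct, Fin.sum_univ_three, planeCoord_apply,
        Eij, Matrix.single_apply]
  refine ⟨A, ?_, ?_⟩
  · rw [Matrix.isUnit_iff_isUnit_det, Matrix.det_fin_three]
    simpa [A] using hdet
  · rw [Submodule.map_span, Set.image_pair, o6, map_congrAct_span_pair, h1, h2]

lemma matEquiv_map_span_pair_o12 (h2 : (2 : F) ≠ 0) (u v : F) :
    MatEquiv F ((Submodule.span F {((1, 0), u), ((0, 1), v)}).map planeCoord) (o12 F) := by
  set A : Mat F := !![0, 1, 0; 1, -(2⁻¹ * u), -(2⁻¹ * v); 0, 0, 1]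
  have h1 : A * planeCoord ((1, 0), u) * Aᵀ = Eij F 0 1 + Eij F 1 0 := by
    ext i j; fin_cases i <;> fin_cases j <;>
      simp [A, Matrix.mul_apply, Fin.sum_univ_three, planeCoord_apply, Eij]
    linear_combination -u * mul_inv_cancel₀ h2
  have h2 : A * planeCoord ((0, 1), v) * Aᵀ = Eij F 1 2 + Eij F 2 1 := by
    ext i j; fin_cases i <;> fin_cases j <;>
      simp [A, Matrix.mul_apply, Fin.sum_univ_three, planeCoord_apply, Eij]
    linear_combination -v * mul_inv_cancel₀ h2
  refine ⟨A, ?_, ?_⟩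
  · rw [Matrix.isUnit_iff_isUnit_det, Matrix.det_fin_three]
    simp [A]
  · rw [Submodule.map_span, Set.image_pair, o12, map_congrAct_span_pair, h1, h2]

lemma o12_le_ker_diagLinearMap : o12 F ≤ LinearMap.ker (Matrix.diagLinearMap (Fin 3) F F) := by
  rw [o12, Submodule.span_le]
  rintro _ (rfl | rfl) <;> ext i <;> fin_cases i <;> simp [Eij]

lemma not_matEquiv_o6_o12 : ¬ MatEquiv F (o6 F) (o12 F) := by
  rintro ⟨A, hA, h⟩
  have hmem : A * Matrix.diagonal ![1, 0, 0] * Aᵀ ∈ o12 F :=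
    h ▸ Submodule.mem_map_of_mem (Submodule.subset_span (by simp))
  have hcol (i : Fin 3) : A i 0 = 0 := by
    have := congrFun (o12_le_ker_diagLinearMap hmem) i
    simpa [Matrix.mul_apply, Fin.sum_univ_three] using this
  exact ((Matrix.isUnit_iff_isUnit_det A).mp hA).ne_zero
    (Matrix.det_eq_zero_of_column_eq_zero 0 hcol)

lemma matEquiv_map_planeCoord_o6_iff (h2 : (2 : F) ≠ 0) {G : Submodule F ((F × F) × F)}
    (hG : finrank F G = 2) :
    MatEquiv F (G.map planeCoord) (o6 F) ↔ ((0, 1) : (F × F) × F) ∈ G := by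
  refine ⟨fun h => by_contra fun he => ?_, fun he => ?_⟩
  · obtain ⟨u, v, rfl⟩ := exists_eq_span_pair_of_inr_one_notMem hG he
    exact not_matEquiv_o6_o12 (h.symm.trans (matEquiv_map_span_pair_o12 h2 u v))
  · obtain ⟨b, c, hbc, rfl⟩ := exists_eq_span_pair_of_inr_one_mem hG he
    exact (matEquiv_o6_map_span_pair_inr_one hbc).symm

lemma matEquiv_map_planeCoord_o12_iff (h2 : (2 : F) ≠ 0) {G : Submodule F ((F × F) × F)}
    (hG : finrank F G = 2) :
    MatEquiv F (G.map planeCoord) (o12 F) ↔ ((0, 1) : (F × F) × F) ∉ G := by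
  refine ⟨fun h he => not_matEquiv_o6_o12
    (((matEquiv_map_planeCoord_o6_iff h2 hG).mpr he).symm.trans h), fun he => ?_⟩
  obtain ⟨u, v, rfl⟩ := exists_eq_span_pair_of_inr_one_notMem hG he
  exact matEquiv_map_span_pair_o12 h2 u v

lemma card_finrank_two_le_plane (Q : Submodule F (Mat F) → Prop) :
    Nat.card {W : Submodule F (Mat F) // W ≤ plane F ∧ finrank F W = 2 ∧ Q W} =
      Nat.card {G : Submodule F ((F × F) × F) // finrank F G = 2 ∧ Q (G.map planeCoord)} := by
  rw [← range_planeCoord, Submodule.card_subtype_le_range planeCoord_injective]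
  simp only [finrank_map_planeCoord]

end Plane

theorem statement_6 (F : Type) [Field F] [Fintype F] (q : ℕ)
    (hq : Fintype.card F = q) (hodd : Odd q) :
    lineCount F (plane F) (o6 F) = q + 1 ∧
    lineCount F (plane F) (o12 F) = q ^ 2 ∧
    (∀ W : Submodule F (Mat F), W ≤ (plane F) → Module.finrank F ↥W = 2 →
      (MatEquiv F W (o6 F) ∨
        MatEquiv F W (o12 F))) ∧
    Nat.card {W : Submodule F (Mat F) // W ≤ (plane F) ∧ Module.finrank F ↥W = 2} = q ^ 2 + q + 1 := by
  have h2 : (2 : F) ≠ 0 := Ring.two_ne_zero fun hchar => by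
    have := FiniteField.even_card_iff_char_two.mp hchar
    rw [hq, ← Nat.even_iff] at this
    exact Nat.not_even_iff_odd.mpr hodd this
  have hcard : Nat.card F = q := by rw [Nat.card_eq_fintype_card, hq]
  have hH : finrank F (F × F) = 2 := by simp
  have hmem : Nat.card {G : Submodule F ((F × F) × F) // finrank F G = 2 ∧ (0, 1) ∈ G} =
      q + 1 := by
    rw [card_subspaces_inr_one_mem hH, hcard]
  have hnotMem : Nat.card {G : Submodule F ((F × F) × F) // finrank F G = 2 ∧ (0, 1) ∉ G} =
      q ^ 2 := by
    have := card_subspaces_inr_one_notMem (K := F) (H := F × F)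
    rwa [hH, hcard] at this
  refine ⟨?_, ?_, fun W hW hW2 => ?_, ?_⟩
  · rw [lineCount, card_finrank_two_le_plane, ← hmem]
    exact Nat.card_congr (Equiv.subtypeEquivRight fun G =>
      and_congr_right (matEquiv_map_planeCoord_o6_iff h2))
  · rw [lineCount, card_finrank_two_le_plane, ← hnotMem]
    exact Nat.card_congr (Equiv.subtypeEquivRight fun G =>
      and_congr_right (matEquiv_map_planeCoord_o12_iff h2))
  · obtain ⟨G, rfl⟩ : ∃ G : Submodule F ((F × F) × F), G.map planeCoord = W :=
      ⟨W.comap planeCoord, Submodule.map_comap_eq_of_le (hW.trans range_planeCoord.ge)⟩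
    rw [finrank_map_planeCoord] at hW2
    by_cases he : ((0, 1) : (F × F) × F) ∈ G
    · exact Or.inl ((matEquiv_map_planeCoord_o6_iff h2 hW2).mpr he)
    · exact Or.inr ((matEquiv_map_planeCoord_o12_iff h2 hW2).mpr he)
  · rw [← range_planeCoord, Submodule.card_subtype_le_range planeCoord_injective,
      Nat.card_subtype_eq_add_card_subtype_not _ fun G => ((0, 1) : (F × F) × F) ∈ G]
    simp only [finrank_map_planeCoord]
    rw [hmem, hnotMem]
    ring
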